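/- For every non-negative integer m, ζ({2}^m) = π^{2m}/(2m+1)!, where ζ({2}^m) = Σ_{n_1>⋯>n_m>0} Π_{j=1}^m n_j^{−2}. -/

import Mathlib

open scoped BigOperators Real

open PowerSeries Finset Filter

/-! ### Stage 1: the Bernoulli-number identity -/

noncomputable def PSA : PowerSeries ℚ :=
  rescale 2 (bernoulliPowerSeries ℚ) - 1 + PowerSeries.X

lemma coeff_PSA (n : ℕ) : (PowerSeries.coeff (R := ℚ) n) PSA =
    2 ^ n * (bernoulli n / n.factorial) - (if n = 0 then 1 else 0)
      + (if n = 1 then 1 else 0) := by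
  simp [PSA, coeff_rescale, bernoulliPowerSeries, PowerSeries.coeff_one, PowerSeries.coeff_X]

lemma coeff_PSA_odd {n : ℕ} (h : ¬ (n ≠ 0 ∧ Even n)) : (PowerSeries.coeff (R := ℚ) n) PSA = 0 := by
  rw [coeff_PSA]
  rcases Nat.eq_zero_or_pos n with h0 | h0
  · subst h0; norm_num
  rcases eq_or_ne n 1 with h1 | h1
  · subst h1; norm_num
  have hodd : Odd n := by
    rcases Nat.even_or_odd n with he | ho
    · exact absurd ⟨h0.ne', he⟩ h
    · exact ho
  rw [bernoulli_eq_bernoulli'_of_ne_one h1,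
    bernoulli'_eq_zero_of_odd hodd (by omega)]
  simp [h0.ne', h1]

lemma key_PS : PSA * (exp ℚ - evalNegHom (exp ℚ))
    = PowerSeries.X * (exp ℚ + evalNegHom (exp ℚ)) - (exp ℚ - evalNegHom (exp ℚ)) := by
  have h0 : exp ℚ * evalNegHom (exp ℚ) = 1 := exp_mul_exp_neg_eq_one (A := ℚ)
  have hB : bernoulliPowerSeries ℚ * (exp ℚ - 1) = PowerSeries.X :=
    bernoulliPowerSeries_mul_exp_sub_one ℚ
  have h2 : rescale (2:ℚ) (bernoulliPowerSeries ℚ) * (exp ℚ ^ 2 - 1)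
      = PowerSeries.C (R := ℚ) 2 * PowerSeries.X := by
    have := congrArg (rescale (2:ℚ)) hB
    rw [map_mul, map_sub, map_one, rescale_X] at this
    rw [← this, exp_pow_eq_rescale_exp]
    norm_num
  have hE : (exp ℚ) ≠ 0 := by
    intro h
    have := constantCoeff_exp (A := ℚ)
    rw [h] at this
    simp at this
  rw [show (PowerSeries.C (R := ℚ)) 2 = 2 from map_ofNat _ 2] at h2
  apply mul_right_cancel₀ hE
  have hA : PSA = rescale 2 (bernoulliPowerSeries ℚ) - 1 + PowerSeries.X := rfl
  rw [hA]
  linear_combination h2 - (rescale 2 (bernoulliPowerSeries ℚ) + 2 * PowerSeries.X) * h0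

lemma coeff_exp_sub (j : ℕ) : (PowerSeries.coeff (R := ℚ) j) (exp ℚ - evalNegHom (exp ℚ))
    = (1 - (-1:ℚ)^j) / j.factorial := by
  simp [evalNegHom, coeff_rescale, coeff_exp, Algebra.algebraMap_self, sub_div]
  ring

lemma coeff_exp_add (j : ℕ) : (PowerSeries.coeff (R := ℚ) j) (exp ℚ + evalNegHom (exp ℚ))
    = (1 + (-1:ℚ)^j) / j.factorial := by
  simp [evalNegHom, coeff_rescale, coeff_exp, Algebra.algebraMap_self, add_div]
  ring

lemma bernoulli_sum_aux (m : ℕ) (hm : 1 ≤ m) :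
    ∑ k ∈ Finset.Icc 1 m,
      (2:ℚ)^(2*k) * (bernoulli (2*k) / (2*k).factorial) * (2 / (2*m+1-2*k).factorial)
      = 2/(2*m).factorial - 2/(2*m+1).factorial := by
  have h := congrArg (PowerSeries.coeff (R := ℚ) (2*m+1)) key_PS
  rw [PowerSeries.coeff_mul, Finset.Nat.sum_antidiagonal_eq_sum_range_succ_mk] at h
  rw [map_sub, PowerSeries.coeff_succ_X_mul, coeff_exp_add, coeff_exp_sub] at h
  have hrhs : (1 + (-1:ℚ)^(2*m)) / (2*m).factorial - (1 - (-1:ℚ)^(2*m+1)) / (2*m+1).factorial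
      = 2/(2*m).factorial - 2/(2*m+1).factorial := by
    rw [pow_succ]
    rw [show ((-1:ℚ))^(2*m) = 1 from by simp [pow_mul]]
    norm_num
  rw [hrhs] at h
  rw [← h]
  have hsub : (Finset.Icc 1 m).image (fun k => 2*k) ⊆ Finset.range (2*m+1+1) := by
    intro i hi
    simp only [Finset.mem_image, Finset.mem_Icc] at hi
    obtain ⟨k, ⟨hk1, hk2⟩, rfl⟩ := hi
    simp only [Finset.mem_range]
    omega
  rw [← Finset.sum_subset hsub]
  · rw [Finset.sum_image (by intro a _ b _ hab; dsimp only at hab; omega)]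
    refine Finset.sum_congr rfl fun k hk => ?_
    simp only [Finset.mem_Icc] at hk
    rw [coeff_PSA, coeff_exp_sub]
    rw [if_neg (by omega), if_neg (by omega)]
    rw [show ((-1:ℚ))^(2*m+1-2*k) = -1 from by
      rw [show 2*m+1-2*k = 2*(m-k)+1 from by omega, pow_succ, pow_mul]; norm_num]
    norm_num
  · intro i hi hni
    rw [coeff_PSA_odd, zero_mul]
    rintro ⟨hi0, k, rfl⟩
    exact hni (Finset.mem_image.mpr ⟨k, Finset.mem_Icc.mpr (by
      simp only [Finset.mem_range] at hi; omega), by omega⟩)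

lemma bernoulli_sum_key (m : ℕ) (hm : 1 ≤ m) :
    ∑ k ∈ Finset.Icc 1 m, (((2*m+1).choose (2*k) : ℚ)) * 2^(2*k) * bernoulli (2*k)
      = 2*m := by
  have h := congrArg (fun x : ℚ => ((2*m+1).factorial : ℚ) / 2 * x) (bernoulli_sum_aux m hm)
  simp only [Finset.mul_sum] at h
  have hfac : ∀ n : ℕ, ((n.factorial : ℚ)) ≠ 0 := fun n => by
    exact_mod_cast n.factorial_ne_zero
  rw [show ((2*m+1).factorial : ℚ) / 2 * (2/(2*m).factorial - 2/(2*m+1).factorial)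
      = (2*m : ℚ) from ?_] at h
  · rw [← h]
    refine Finset.sum_congr rfl fun k hk => ?_
    simp only [Finset.mem_Icc] at hk
    rw [Nat.cast_choose ℚ (show 2*k ≤ 2*m+1 by omega)]
    rw [show 2*m+1-2*k = 2*(m-k)+1 from by omega] at *
    field_simp
  · rw [show (2*m+1).factorial = (2*m+1) * (2*m).factorial from rfl]
    push_cast
    field_simp
    ring

/-! ### Stage 2: Newton's identity for the real elementary symmetric sums -/

noncomputable def xr (i : ℕ) : ℝ := 1 / ((i:ℝ)+1)^2
noncomputable def Es (m n : ℕ) : ℝ := ∑ s ∈ Finset.powersetCard m (Finset.range n), ∏ i ∈ s, xr i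
noncomputable def Ps (k n : ℕ) : ℝ := ∑ i ∈ Finset.range n, (xr i)^k

lemma range_eq_map_univ (n : ℕ) :
    Finset.range n = (Finset.univ : Finset (Fin n)).map Fin.valEmbedding := by
  rw [Fin.map_valEmbedding_univ]
  ext i; simp

lemma aeval_esymm (n m : ℕ) :
    MvPolynomial.aeval (fun i : Fin n => xr i) (MvPolynomial.esymm (Fin n) ℝ m) = Es m n := by
  rw [MvPolynomial.esymm, map_sum, Es, range_eq_map_univ n, Finset.powersetCard_map,
    Finset.sum_map]
  refine Finset.sum_congr rfl fun t _ => ?_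
  rw [map_prod]
  simp only [MvPolynomial.aeval_X]
  rw [show (Finset.mapEmbedding Fin.valEmbedding).toEmbedding t = t.map Fin.valEmbedding
    from Finset.mapEmbedding_apply, Finset.prod_map]
  rfl

lemma aeval_psum (n k : ℕ) :
    MvPolynomial.aeval (fun i : Fin n => xr i) (MvPolynomial.psum (Fin n) ℝ k) = Ps k n := by
  rw [MvPolynomial.psum, map_sum, Ps]
  simp only [map_pow, MvPolynomial.aeval_X]
  exact Fin.sum_univ_eq_sum_range (fun i => xr i ^ k) n

lemma newton_real (m n : ℕ) :
    (m:ℝ) * Es m n = (-1)^(m+1) *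
      ∑ a ∈ (Finset.HasAntidiagonal.antidiagonal m).filter (fun a => a.1 < m),
        (-1)^a.1 * Es a.1 n * Ps a.2 n := by
  have h := congrArg (MvPolynomial.aeval (fun i : Fin n => xr i))
    (MvPolynomial.mul_esymm_eq_sum (Fin n) ℝ m)
  simp only [map_mul, map_sum, map_pow, map_neg, map_one, map_natCast,
    aeval_esymm, aeval_psum] at h
  exact h

/-! ### Stage 3: convergence -/

noncomputable def gg (m : ℕ) (f : Fin m → ℕ) : ℝ := ∏ j, 1 / ((f j : ℝ))^2

lemma gg_nonneg (m : ℕ) (f : Fin m → ℕ) : 0 ≤ gg m f :=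
  Finset.prod_nonneg fun j _ => by positivity

lemma summable_gg (m : ℕ) : Summable (gg m) := by
  induction m with
  | zero => exact Summable.of_finite
  | succ m ih =>
      have h1 : Summable (fun a : ℕ => 1/((a:ℝ))^2) := by
        simpa using Real.summable_one_div_nat_pow.mpr one_lt_two
      have h := h1.mul_of_nonneg ih (fun a => by positivity) (gg_nonneg m)
      rw [← (Fin.consEquiv (fun _ : Fin (m+1) => ℕ)).summable_iff]
      refine h.congr fun p => ?_
      simp only [Function.comp_apply, Fin.consEquiv_apply, gg, Fin.prod_univ_succ,
        Fin.cons_zero, Fin.cons_succ]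

/-- The predicate defining admissible tuples. -/
def Pm (m : ℕ) (f : Fin m → ℕ) : Prop :=
  (∀ i j : Fin m, i < j → f j < f i) ∧ ∀ j, 0 < f j

noncomputable def Ds (m n : ℕ) : Finset (Fin m → ℕ) :=
  (Fintype.piFinset fun _ => Finset.Icc 1 n).filter fun f => ∀ i j : Fin m, i < j → f j < f i

lemma mem_Ds {m n : ℕ} {f : Fin m → ℕ} :
    f ∈ Ds m n ↔ (∀ j, 1 ≤ f j ∧ f j ≤ n) ∧ ∀ i j : Fin m, i < j → f j < f i := by
  simp [Ds, Fintype.mem_piFinset]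

lemma image_orderEmbOfFin {s : Finset ℕ} {k : ℕ} (h : s.card = k) :
    Finset.univ.image (s.orderEmbOfFin h) = s := by
  ext a
  simp only [Finset.mem_image, Finset.mem_univ, true_and]
  constructor
  · rintro ⟨i, rfl⟩; exact Finset.orderEmbOfFin_mem s h i
  · intro ha
    have : a ∈ Set.range (s.orderEmbOfFin h) := by
      rw [Finset.range_orderEmbOfFin]; exact ha
    obtain ⟨i, hi⟩ := this
    exact ⟨i, hi⟩

lemma Ds_injOn {m n : ℕ} {f : Fin m → ℕ} (hf : f ∈ Ds m n) :
    ∀ a ∈ (Finset.univ : Finset (Fin m)), ∀ b ∈ Finset.univ, f a - 1 = f b - 1 → a = b := by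
  rw [mem_Ds] at hf
  intro a _ b _ hab
  by_contra hne
  rcases lt_trichotomy a b with h | h | h
  · have := hf.2 a b h
    have := (hf.1 a).1
    have := (hf.1 b).1
    omega
  · exact hne h
  · have := hf.2 b a h
    have := (hf.1 a).1
    have := (hf.1 b).1
    omega

lemma Ds_image_card {m n : ℕ} {f : Fin m → ℕ} (hf : f ∈ Ds m n) :
    (Finset.univ.image (fun j => f j - 1)).card = m := by
  rw [Finset.card_image_iff.mpr, Finset.card_univ, Fintype.card_fin]
  intro a ha b hb hab
  exact Ds_injOn hf a ha b hb hab

lemma Ds_sum_eq_Es (m n : ℕ) : ∑ f ∈ Ds m n, gg m f = Es m n := by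
  rw [Es]
  refine Finset.sum_bij' (fun f _ => Finset.univ.image (fun j => f j - 1))
    (fun s hs => fun j : Fin m =>
      s.orderEmbOfFin (Finset.mem_powersetCard.mp hs).2 j.rev + 1)
    ?_ ?_ ?_ ?_ ?_
  · -- maps into powersetCard
    intro f hf
    rw [Finset.mem_powersetCard]
    refine ⟨?_, Ds_image_card hf⟩
    rw [mem_Ds] at hf
    intro i hi
    simp only [Finset.mem_image, Finset.mem_univ, true_and] at hi
    obtain ⟨j, rfl⟩ := hi
    have := (hf.1 j).1
    have := (hf.1 j).2
    simp only [Finset.mem_range]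
    omega
  · -- backward maps into Ds
    intro s hs
    have hcard := (Finset.mem_powersetCard.mp hs).2
    have hsub := (Finset.mem_powersetCard.mp hs).1
    rw [mem_Ds]
    constructor
    · intro j
      have hmem := Finset.orderEmbOfFin_mem s hcard j.rev
      have h2 := hsub hmem
      simp only [Finset.mem_range] at h2
      refine ⟨by omega, by omega⟩
    · intro i j hij
      have h3 : j.rev < i.rev := by
        rw [Fin.rev_lt_rev]; exact hij
      have h4 := (s.orderEmbOfFin hcard).strictMono h3
      omega
  · -- left inverse
    intro f hf
    have hf' := hf
    rw [mem_Ds] at hf'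
    funext k
    set s := Finset.univ.image (fun j => f j - 1) with hs
    have hcard : s.card = m := Ds_image_card hf
    have huniq : (fun x : Fin m => f x.rev - 1) = s.orderEmbOfFin hcard := by
      apply Finset.orderEmbOfFin_unique
      · intro x
        exact Finset.mem_image.mpr ⟨x.rev, Finset.mem_univ _, rfl⟩
      · intro a b hab
        have hrev : b.rev < a.rev := by rw [Fin.rev_lt_rev]; exact hab
        have h5 := hf'.2 b.rev a.rev hrev
        have h6 := (hf'.1 a.rev).1
        show f a.rev - 1 < f b.rev - 1
        omega
    have h7 := congrFun huniq k.rev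
    simp only [Fin.rev_rev] at h7
    have h1 := (hf'.1 k).1
    show s.orderEmbOfFin _ k.rev + 1 = f k
    omega
  · -- right inverse
    intro s hs
    have hcard := (Finset.mem_powersetCard.mp hs).2
    ext a
    simp only [Finset.mem_image, Finset.mem_univ, true_and]
    constructor
    · rintro ⟨j, rfl⟩
      simpa using Finset.orderEmbOfFin_mem s hcard j.rev
    · intro ha
      have h8 : a ∈ Set.range (s.orderEmbOfFin hcard) := by
        rw [Finset.range_orderEmbOfFin]; exact ha
      obtain ⟨i, hi⟩ := h8
      exact ⟨i.rev, by simp [Fin.rev_rev, hi]⟩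
  · -- values agree
    intro f hf
    rw [Finset.prod_image (Ds_injOn hf), gg]
    refine Finset.prod_congr rfl fun j _ => ?_
    rw [mem_Ds] at hf
    have h1 := (hf.1 j).1
    rw [xr]
    congr 2
    rw [Nat.cast_sub h1]
    push_cast
    ring

/-- The multiple zeta value `ζ({2}^m)` of depth `m` with all arguments equal to `2`. -/
noncomputable def zetaTwoRep (m : ℕ) : ℝ :=
  ∑' n : {f : Fin m → ℕ // (∀ i j : Fin m, i < j → f j < f i) ∧ ∀ j, 0 < f j},
    ∏ j : Fin m, (1 / (n.1 j : ℝ) ^ 2)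

instance (m : ℕ) : DecidablePred (Pm m) := fun f => by unfold Pm; infer_instance

noncomputable def As (m n : ℕ) : Finset {f : Fin m → ℕ // Pm m f} :=
  (Ds m n).subtype (Pm m)

lemma As_sum (m n : ℕ) : ∑ t ∈ As m n, gg m t.1 = ∑ f ∈ Ds m n, gg m f := by
  rw [As, Finset.sum_subtype_eq_sum_filter]
  congr 1
  apply Finset.filter_true_of_mem
  intro f hf
  rw [mem_Ds] at hf
  exact ⟨hf.2, fun j => (hf.1 j).1⟩

lemma monotone_As (m : ℕ) : Monotone (As m) := by
  intro n n' hn t ht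
  rw [As, Finset.mem_subtype] at ht ⊢
  rw [mem_Ds] at ht ⊢
  exact ⟨fun j => ⟨(ht.1 j).1, le_trans (ht.1 j).2 hn⟩, ht.2⟩

lemma exists_As (m : ℕ) (t : {f : Fin m → ℕ // Pm m f}) : ∃ n, t ∈ As m n := by
  refine ⟨Finset.univ.sup t.1, ?_⟩
  rw [As, Finset.mem_subtype, mem_Ds]
  exact ⟨fun j => ⟨t.2.2 j, Finset.le_sup (Finset.mem_univ j)⟩, t.2.1⟩

lemma tendsto_Es (m : ℕ) : Filter.Tendsto (fun n => Es m n) atTop (nhds (zetaTwoRep m)) := by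
  have hsum : Summable (fun t : {f : Fin m → ℕ // Pm m f} => gg m t.1) :=
    (summable_gg m).subtype (setOf (Pm m))
  have h0 : zetaTwoRep m = ∑' t : {f : Fin m → ℕ // Pm m f}, gg m t.1 := rfl
  have h1 : HasSum (fun t : {f : Fin m → ℕ // Pm m f} => gg m t.1) (zetaTwoRep m) :=
    h0 ▸ hsum.hasSum
  have h2 := h1.comp (tendsto_atTop_finset_of_monotone (monotone_As m) (exists_As m))
  refine h2.congr fun n => ?_
  rw [Function.comp_apply, As_sum, Ds_sum_eq_Es]

noncomputable def Zr (k : ℕ) : ℝ :=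
  (-1 : ℝ) ^ (k + 1) * (2 : ℝ) ^ (2 * k - 1) * π ^ (2 * k) *
    (bernoulli (2 * k) : ℝ) / (2 * k).factorial

lemma tendsto_Ps (k : ℕ) (hk : k ≠ 0) :
    Filter.Tendsto (fun n => Ps k n) atTop (nhds (Zr k)) := by
  have h := (hasSum_zeta_nat hk).tendsto_sum_nat
  have h2 := h.comp (tendsto_add_atTop_nat 1)
  refine h2.congr fun n => ?_
  rw [Function.comp_apply, Finset.sum_range_succ']
  have h0 : (1 : ℝ) / ((0:ℕ) : ℝ) ^ (2 * k) = 0 := by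
    rw [Nat.cast_zero, zero_pow (by omega), div_zero]
  rw [h0, add_zero, Ps]
  refine Finset.sum_congr rfl fun i _ => ?_
  rw [xr, div_pow, one_pow, ← pow_mul]
  push_cast
  rw [mul_comm 2 k]

lemma rec_L (m : ℕ) :
    (m:ℝ) * zetaTwoRep m = (-1)^(m+1) *
      ∑ a ∈ (Finset.HasAntidiagonal.antidiagonal m).filter (fun a => a.1 < m),
        (-1)^a.1 * zetaTwoRep a.1 * Zr a.2 := by
  have hL : Filter.Tendsto (fun n => (m:ℝ) * Es m n) atTop (nhds ((m:ℝ) * zetaTwoRep m)) :=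
    (tendsto_Es m).const_mul _
  have hR : Filter.Tendsto
      (fun n => (-1:ℝ)^(m+1) * ∑ a ∈ (Finset.HasAntidiagonal.antidiagonal m).filter (fun a => a.1 < m),
        (-1)^a.1 * Es a.1 n * Ps a.2 n) atTop
      (nhds ((-1:ℝ)^(m+1) * ∑ a ∈ (Finset.HasAntidiagonal.antidiagonal m).filter (fun a => a.1 < m),
        (-1)^a.1 * zetaTwoRep a.1 * Zr a.2)) := by
    apply Filter.Tendsto.const_mul
    apply tendsto_finset_sum
    intro a ha
    have ha2 : a.2 ≠ 0 := by
      simp only [Finset.mem_filter, Finset.HasAntidiagonal.mem_antidiagonal] at ha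
      omega
    exact ((tendsto_Es a.1).const_mul _).mul (tendsto_Ps a.2 ha2)
  have heq : (fun n => (m:ℝ) * Es m n)
      = fun n => (-1:ℝ)^(m+1) * ∑ a ∈ (Finset.HasAntidiagonal.antidiagonal m).filter (fun a => a.1 < m),
        (-1)^a.1 * Es a.1 n * Ps a.2 n := funext fun n => newton_real m n
  rw [heq] at hL
  exact tendsto_nhds_unique hL hR

lemma rec_c (m : ℕ) (hm : 1 ≤ m) :
    (m:ℝ) * (π ^ (2*m) / ((2*m+1).factorial : ℝ)) = (-1)^(m+1) *
      ∑ a ∈ (Finset.HasAntidiagonal.antidiagonal m).filter (fun a => a.1 < m),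
        (-1)^a.1 * (π ^ (2*a.1) / ((2*a.1+1).factorial : ℝ)) * Zr a.2 := by
  have himg : (Finset.HasAntidiagonal.antidiagonal m).filter (fun a => a.1 < m)
      = (Finset.Icc 1 m).image (fun k => (m - k, k)) := by
    ext ⟨a1, a2⟩
    simp only [Finset.mem_filter, Finset.HasAntidiagonal.mem_antidiagonal, Finset.mem_image, Finset.mem_Icc,
      Prod.mk.injEq]
    constructor
    · rintro ⟨h1, h2⟩
      exact ⟨a2, ⟨by omega, by omega⟩, by omega, rfl⟩
    · rintro ⟨k, ⟨hk1, hk2⟩, rfl, rfl⟩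
      omega
  have hinj : ∀ a ∈ Finset.Icc 1 m, ∀ b ∈ Finset.Icc 1 m,
      (m - a, a) = (m - b, b) → a = b := by
    intro a _ b _ h
    exact (Prod.mk.injEq _ _ _ _ ▸ h).2
  rw [himg, Finset.sum_image hinj, Finset.mul_sum]
  dsimp only
  have hkey : (∑ k ∈ Finset.Icc 1 m,
      (((2*m+1).choose (2*k) : ℝ)) * 2^(2*k) * ((bernoulli (2*k) : ℚ) : ℝ)) = 2*m := by
    have := congrArg (fun q : ℚ => (q : ℝ)) (bernoulli_sum_key m hm)
    push_cast at this ⊢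
    convert this using 2
  calc (m:ℝ) * (π ^ (2*m) / ((2*m+1).factorial : ℝ))
      = π ^ (2*m) / (2*((2*m+1).factorial : ℝ)) *
        ∑ k ∈ Finset.Icc 1 m,
          (((2*m+1).choose (2*k) : ℝ)) * 2^(2*k) * ((bernoulli (2*k) : ℚ) : ℝ) := by
        rw [hkey]
        have : ((2*m+1).factorial : ℝ) ≠ 0 := Nat.cast_ne_zero.mpr (Nat.factorial_ne_zero _)
        field_simp
    _ = ∑ k ∈ Finset.Icc 1 m, (-1:ℝ)^(m+1) *
          ((-1)^(m-k) * (π ^ (2*(m-k)) / ((2*(m-k)+1).factorial : ℝ)) * Zr k) := by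
        rw [Finset.mul_sum]
        refine Finset.sum_congr rfl fun k hk => ?_
        simp only [Finset.mem_Icc] at hk
        have hsign : (-1:ℝ)^(m+1) * (-1:ℝ)^(m-k) * (-1:ℝ)^(k+1) = 1 := by
          rw [← pow_add, ← pow_add, show (m+1)+(m-k)+(k+1) = 2*(m+1) by omega, pow_mul]
          norm_num
        rw [Zr]
        rw [show (-1:ℝ)^(m+1) * ((-1:ℝ)^(m-k) * (π ^ (2*(m-k)) / ((2*(m-k)+1).factorial : ℝ)) *
            ((-1:ℝ) ^ (k + 1) * (2:ℝ) ^ (2*k-1) * π ^ (2*k) * (bernoulli (2*k) : ℝ)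
              / ((2*k).factorial : ℝ)))
          = ((-1:ℝ)^(m+1) * (-1:ℝ)^(m-k) * (-1:ℝ)^(k+1)) *
            ((π ^ (2*(m-k)) / ((2*(m-k)+1).factorial : ℝ)) *
             ((2:ℝ) ^ (2*k-1) * π ^ (2*k) * (bernoulli (2*k) : ℝ) / ((2*k).factorial : ℝ)))
          from by ring, hsign, one_mul]
        rw [Nat.cast_choose ℝ (show 2*k ≤ 2*m+1 by omega),
          show 2*m+1-2*k = 2*(m-k)+1 from by omega]
        have hpi : (π:ℝ) ^ (2*m) = π ^ (2*(m-k)) * π ^ (2*k) := by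
          rw [← pow_add, show 2*(m-k) + 2*k = 2*m by omega]
        have h2k : (2:ℝ)^(2*k) = 2 * (2:ℝ)^(2*k-1) := by
          have hp := pow_succ (2:ℝ) (2*k-1)
          rw [show (2*k-1)+1 = 2*k by omega] at hp
          rw [hp]
          ring
        have hf1 : ((2*(m-k)+1).factorial : ℝ) ≠ 0 := Nat.cast_ne_zero.mpr (Nat.factorial_ne_zero _)
        have hf2 : ((2*k).factorial : ℝ) ≠ 0 := Nat.cast_ne_zero.mpr (Nat.factorial_ne_zero _)
        have hf3 : ((2*m+1).factorial : ℝ) ≠ 0 := Nat.cast_ne_zero.mpr (Nat.factorial_ne_zero _)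
        rw [hpi, h2k]
        field_simp

theorem zeta_two_rep_eval (m : ℕ) :
    zetaTwoRep m = π ^ (2 * m) / (Nat.factorial (2 * m + 1)) := by
  induction m using Nat.strong_induction_on with
  | _ m ih =>
    rcases Nat.eq_zero_or_pos m with rfl | hm
    · have huniq : ∀ t : {f : Fin 0 → ℕ // (∀ i j : Fin 0, i < j → f j < f i) ∧ ∀ j, 0 < f j},
          t = ⟨fun i => i.elim0, fun i j _ => i.elim0, fun j => j.elim0⟩ :=
        fun t => Subtype.ext (funext fun i => i.elim0)
      rw [show zetaTwoRep 0 = ∑' t : {f : Fin 0 → ℕ //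
          (∀ i j : Fin 0, i < j → f j < f i) ∧ ∀ j, 0 < f j},
          ∏ j : Fin 0, (1 / ((t.1 j : ℝ)) ^ 2) from rfl]
      rw [tsum_eq_single ⟨fun i => i.elim0, fun i j _ => i.elim0, fun j => j.elim0⟩
        (fun b hb => (hb (huniq b)).elim)]
      simp [Nat.factorial]
    · have h1 := rec_L m
      have h2 := rec_c m hm
      have hsum_eq : ∑ a ∈ (Finset.HasAntidiagonal.antidiagonal m).filter (fun a => a.1 < m),
            (-1:ℝ)^a.1 * zetaTwoRep a.1 * Zr a.2
          = ∑ a ∈ (Finset.HasAntidiagonal.antidiagonal m).filter (fun a => a.1 < m),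
            (-1:ℝ)^a.1 * (π ^ (2*a.1) / ((2*a.1+1).factorial : ℝ)) * Zr a.2 := by
        refine Finset.sum_congr rfl fun a ha => ?_
        have halt : a.1 < m := (Finset.mem_filter.mp ha).2
        rw [ih a.1 halt]
      rw [hsum_eq, ← h2] at h1
      have hmne : (m:ℝ) ≠ 0 := Nat.cast_ne_zero.mpr (by omega)
      exact mul_left_cancel₀ hmne h1
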